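/- arXiv:1504.04472 — 3 statements merged into one kernel-verified Lean document; each statement's English description precedes it below -/
import Mathlib

section
/- Let (Ω, ℰ) be a measurable space, Θ a parameter space, X : Ω → S a measurable map into a measurable space (S, 𝒮), and C : S → Set Θ a set-valued map such that for every θ ∈ Θ the set {x ∈ S : θ ∈ C(x)} is in 𝒮. Let α ∈ [0,1), let (P_θ)_{θ∈Θ} be a family of probability measures on (Ω, ℰ), and let P be a probability measure on (Ω, ℰ) with P ≪ P_θ for every θ ∈ Θ. Fix θ ∈ Θ, and suppose the conditional probability of coverage given the data satisfies E_{P_θ}[1_{{ω : θ ∈ C(X(ω))}} | σ(X)] ≥ 1 − α holds P_θ-almost surely. Then θ ∈ C(X) P_θ-almost surely, and hence θ ∈ C(X) P-almost surely, i.e. P({ω : θ ∈ C(X(ω))}) = 1. -/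
open MeasureTheory ProbabilityTheory

/-- **Proposition 1(i) (Neyman-Pearson inadequacy for past-realized data).** A pivotal
confidence region whose conditional coverage given the realized data is at least `1 - α`
(with `α < 1`) under every `P_θ` must contain each parameter value `θ` almost surely, both
under `P_θ` and under the true measure `P ≪ P_θ`; it is therefore uninformative. -/
theorem stmt_4 {Ω S Θ : Type*} [MeasurableSpace Ω] [MeasurableSpace S]
    (X : Ω → S) (hX : Measurable X)
    (C : S → Set Θ) (hC : ∀ θ : Θ, MeasurableSet {x : S | θ ∈ C x})
    (α : ℝ) (hα0 : 0 ≤ α) (hα1 : α < 1)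
    (Pθ : Θ → Measure Ω) (hPθ : ∀ θ, IsProbabilityMeasure (Pθ θ))
    (P : Measure Ω) [IsProbabilityMeasure P]
    (habs : ∀ θ, P ≪ Pθ θ)
    (θ : Θ)
    (hcov : ∀ᵐ ω ∂(Pθ θ),
      1 - α ≤ ((Pθ θ)[Set.indicator {ω' : Ω | θ ∈ C (X ω')} (fun _ => (1 : ℝ)) |
        MeasurableSpace.comap X inferInstance]) ω) :
    (∀ᵐ ω ∂(Pθ θ), θ ∈ C (X ω)) ∧ P {ω | θ ∈ C (X ω)} = 1 := by
  haveI := hPθ θ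
  have hmle : MeasurableSpace.comap X inferInstance ≤ (by infer_instance : MeasurableSpace Ω) :=
    hX.comap_le
  set E : Set Ω := {ω' : Ω | θ ∈ C (X ω')} with hE
  have hEm : MeasurableSet[MeasurableSpace.comap X inferInstance] E :=
    ⟨{x : S | θ ∈ C x}, hC θ, rfl⟩
  have hEmeas : MeasurableSet E := hmle _ hEm
  have hf : StronglyMeasurable[MeasurableSpace.comap X inferInstance]
      (Set.indicator E (fun _ => (1 : ℝ))) :=
    stronglyMeasurable_const.indicator hEm
  have hint : Integrable (Set.indicator E (fun _ => (1 : ℝ))) (Pθ θ) :=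
    (integrable_const (1 : ℝ)).indicator hEmeas
  have hce : (Pθ θ)[Set.indicator E (fun _ => (1 : ℝ)) | MeasurableSpace.comap X inferInstance]
      =ᵐ[Pθ θ] Set.indicator E (fun _ => (1 : ℝ)) :=
    (condExp_of_stronglyMeasurable hmle hf hint).symm ▸ Filter.EventuallyEq.refl _ _
  have h1 : ∀ᵐ ω ∂(Pθ θ), θ ∈ C (X ω) := by
    filter_upwards [hcov, hce] with ω h1 h2
    by_contra h
    have hnot : ω ∉ E := h
    rw [h2, Set.indicator_of_notMem hnot] at h1
    linarith
  refine ⟨h1, ?_⟩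
  have h2 : ∀ᵐ ω ∂P, θ ∈ C (X ω) := (habs θ).ae_le h1
  rw [← prob_compl_eq_zero_iff hEmeas]
  simpa [ae_iff, E, Set.compl_setOf] using h2
end

section
/- Let (Ω, ℰ, P) be a probability space, θ₀ ∈ ℝ^p, and (θ*_T)_{T≥1} measurable maps θ*_T : Ω → ℝ^p with θ*_T → θ₀ in P-probability. Let Σ̂_T : Ω → ℝ^{p×p} be measurable random matrices with Σ̂_T → Σ in P-probability, where Σ is a matrix with strictly positive diagonal entries. For each ω and T, let ν_T(ω) be the product probability measure on ℝ^p whose k-th factor is the Gaussian distribution on ℝ with mean the k-th coordinate θ*_{T,k}(ω) and variance max(Σ̂_{T,kk}(ω), 0)/T (the Dirac at θ*_{T,k}(ω) when this variance is 0). Then the Lévy–Prokhorov distance ρ_P(ν_T, δ_{θ₀}) converges to 0 in P-probability as T → ∞. -/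
open MeasureTheory ProbabilityTheory Filter Topology
open scoped ENNReal NNReal

lemma aux_pi_eval {p : ℕ} (ν : Fin p → Measure ℝ) [∀ k, IsProbabilityMeasure (ν k)]
    (k : Fin p) {s : Set ℝ} (hs : MeasurableSet s) :
    Measure.pi ν (Function.eval k ⁻¹' s) = ν k s := by
  classical
  rw [← Set.univ_pi_update_univ, Measure.pi_pi]
  rw [Finset.prod_eq_single k
    (fun j _ hj => by rw [Function.update_of_ne hj]; exact measure_univ)
    (fun h => absurd (Finset.mem_univ k) h)]
  rw [Function.update_self]

lemma aux_tail {p : ℕ} (ν : Fin p → Measure ℝ) [∀ k, IsProbabilityMeasure (ν k)]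
    (θ₀ : Fin p → ℝ) {δ : ℝ} (hδ : 0 < δ) :
    Measure.pi ν {y | δ ≤ dist y θ₀} ≤ ∑ k, ν k {x | δ ≤ |x - θ₀ k|} := by
  classical
  have hsub : {y : Fin p → ℝ | δ ≤ dist y θ₀}
      ⊆ ⋃ k, Function.eval k ⁻¹' {x | δ ≤ |x - θ₀ k|} := by
    intro y hy
    have h1 : ¬ dist y θ₀ < δ := not_lt.mpr hy
    rw [dist_pi_lt_iff hδ] at h1
    push_neg at h1
    obtain ⟨k, hk⟩ := h1
    exact Set.mem_iUnion.mpr ⟨k, by simpa [Real.dist_eq] using hk⟩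
  refine (measure_mono hsub).trans ((measure_iUnion_fintype_le _ _).trans ?_)
  refine Finset.sum_le_sum fun k _ => le_of_eq (aux_pi_eval ν k ?_)
  exact measurableSet_le measurable_const (measurable_id.sub_const _).abs

lemma aux_gauss_tail (m t R : ℝ) (v : ℝ≥0) (ht : 0 < t)
    (hvR : Real.sqrt v * R ≤ t) :
    gaussianReal m v {x | t ≤ |x - m|} ≤ gaussianReal 0 1 {x | R ≤ |x|} := by
  by_cases hv : v = 0
  · subst hv
    rw [gaussianReal_zero_var, Measure.dirac_apply]
    have : m ∉ {x : ℝ | t ≤ |x - m|} := by simp [ht.not_ge]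
    simp [Set.indicator_of_notMem this]
  · have hf : Measurable fun x : ℝ => Real.sqrt v * x := measurable_id.const_mul _
    have hg : Measurable fun x : ℝ => x + m := measurable_add_const m
    have hmap : (gaussianReal 0 1).map (fun x => Real.sqrt v * x + m)
        = gaussianReal m v := by
      have h1 := gaussianReal_map_const_mul (μ := 0) (v := 1) (Real.sqrt v)
      have h2 : (NNReal.mk ((Real.sqrt v) ^ 2) (sq_nonneg _) * 1 : ℝ≥0) = v := by
        rw [mul_one]; apply NNReal.coe_injective
        simp [Real.sq_sqrt v.coe_nonneg]
      rw [h2, mul_zero] at h1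
      have h3 := gaussianReal_map_add_const (μ := 0) (v := v) m
      rw [zero_add] at h3
      calc (gaussianReal 0 1).map (fun x => Real.sqrt v * x + m)
          = ((gaussianReal 0 1).map (fun x => Real.sqrt v * x)).map (· + m) := by
            rw [Measure.map_map hg hf]; rfl
        _ = gaussianReal m v := by rw [h1, h3]
    have hsv : 0 < Real.sqrt v := Real.sqrt_pos.mpr (by
      exact_mod_cast pos_iff_ne_zero.mpr hv)
    have hBset : MeasurableSet {x : ℝ | t ≤ |x - m|} :=
      measurableSet_le measurable_const (measurable_id.sub_const _).abs
    rw [← hmap, Measure.map_apply (hf.add_const m) hBset]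
    refine measure_mono fun x hx => ?_
    simp only [Set.mem_preimage, Set.mem_setOf_eq, add_sub_cancel_right] at hx
    have habs : |Real.sqrt v * x| = Real.sqrt v * |x| := by
      rw [abs_mul, abs_of_nonneg (Real.sqrt_nonneg _)]
    rw [habs] at hx
    have : Real.sqrt v * R ≤ Real.sqrt v * |x| := hvR.trans hx
    exact Set.mem_setOf_eq ▸ le_of_mul_le_mul_left this hsv

lemma aux_lp {p : ℕ} (μ : Measure (Fin p → ℝ)) [IsProbabilityMeasure μ]
    (θ₀ : Fin p → ℝ) {δ : ℝ} (hδ : 0 < δ)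
    (h : μ {y | δ ≤ dist y θ₀} ≤ ENNReal.ofReal δ) :
    levyProkhorovDist μ (Measure.dirac θ₀) ≤ δ := by
  apply levyProkhorovDist_le_of_forall_le μ (Measure.dirac θ₀) hδ.le
  intro ε B hε hB
  by_cases hmem : θ₀ ∈ Metric.thickening ε B
  · calc μ B ≤ 1 := prob_le_one
      _ ≤ Measure.dirac θ₀ (Metric.thickening ε B) + ENNReal.ofReal ε := by
          rw [Measure.dirac_apply_of_mem hmem]; exact le_self_add
  · have hsub : B ⊆ {y | δ ≤ dist y θ₀} := by
      intro y hy
      have h1 : ¬ dist θ₀ y < ε := fun hlt =>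
        hmem (Metric.mem_thickening_iff.mpr ⟨y, hy, hlt⟩)
      have h2 := not_lt.mp h1
      simp only [Set.mem_setOf_eq]
      rw [dist_comm]
      linarith
    calc μ B ≤ ENNReal.ofReal δ := le_trans (measure_mono hsub) h
      _ ≤ ENNReal.ofReal ε := ENNReal.ofReal_le_ofReal hε.le
      _ ≤ _ := le_add_self

/-- **Proposition 5 (consistency of the Gaussian approximation).** If `θ*_T → θ₀` in
probability and the random matrices `Σ̂_T` converge entrywise in probability to a matrix
`Σ` with strictly positive diagonal, then the product-Gaussian approximation with means
`θ*_{T,k}` and variances `max(Σ̂_{T,kk}, 0)/T` converges to the Dirac measure at `θ₀` in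
Lévy–Prokhorov distance, in probability. -/
theorem stmt_13 {Ω : Type*} [MeasurableSpace Ω]
    (P : Measure Ω) [IsProbabilityMeasure P]
    {p : ℕ} (θ₀ : Fin p → ℝ)
    (θstar : ℕ → Ω → (Fin p → ℝ)) (hθmeas : ∀ T, Measurable (θstar T))
    (hθprob : TendstoInMeasure P θstar atTop (fun _ => θ₀))
    (Shat : ℕ → Ω → (Fin p → Fin p → ℝ)) (hSmeas : ∀ T, Measurable (Shat T))
    (S : (Fin p → Fin p → ℝ)) (hSdiag : ∀ k, 0 < S k k)
    (hSprob : ∀ k l, TendstoInMeasure P (fun T ω => Shat T ω k l) atTop (fun _ => S k l)) :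
    ∀ ε > (0 : ℝ),
      Tendsto (fun T => P {ω | ε <
        levyProkhorovDist
          (Measure.pi fun k =>
            gaussianReal (θstar T ω k) ((Shat T ω k k / (T : ℝ)).toNNReal))
          (Measure.dirac θ₀)}) atTop (𝓝 0) := by
  intro ε hε
  set δ := min ε 1 with hδdef
  have hδ : 0 < δ := lt_min hε one_pos
  have hδε : δ ≤ ε := min_le_left _ _
  -- choose the truncation level R for the standard gaussian tail
  obtain ⟨R, hR1, hRtail⟩ : ∃ R : ℕ, 1 ≤ R ∧
      gaussianReal 0 1 {x | (R : ℝ) ≤ |x|} ≤ ENNReal.ofReal δ / ((p : ℝ≥0∞) + 1) := by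
    have h0 : (⋂ n : ℕ, {x : ℝ | (n : ℝ) ≤ |x|}) = ∅ := by
      ext x
      simp only [Set.mem_iInter, Set.mem_setOf_eq, Set.mem_empty_iff_false, iff_false,
        not_forall, not_le]
      obtain ⟨n, hn⟩ := exists_nat_gt |x|
      exact ⟨n, hn⟩
    have hanti : Antitone fun n : ℕ => {x : ℝ | (n : ℝ) ≤ |x|} := by
      intro a b hab x hx
      simp only [Set.mem_setOf_eq] at hx ⊢
      exact le_trans (show (a : ℝ) ≤ (b : ℝ) by exact_mod_cast hab) hx
    have htt := tendsto_measure_iInter_atTop (μ := gaussianReal 0 1)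
      (s := fun n : ℕ => {x : ℝ | (n : ℝ) ≤ |x|})
      (fun n => (measurableSet_le measurable_const measurable_id.abs).nullMeasurableSet)
      hanti ⟨0, measure_ne_top _ _⟩
    rw [h0, measure_empty] at htt
    have hpos : (0 : ℝ≥0∞) < ENNReal.ofReal δ / ((p : ℝ≥0∞) + 1) := by
      apply ENNReal.div_pos
      · simpa using (ENNReal.ofReal_pos.mpr hδ).ne'
      · simp [ENNReal.add_ne_top]
    have := (htt.eventually (eventually_le_nhds hpos)).and (eventually_ge_atTop 1)
    obtain ⟨R, hR⟩ := this.exists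
    exact ⟨R, hR.2, hR.1⟩
  have hRpos : (0 : ℝ) < R := by exact_mod_cast hR1
  -- constants
  set C : ℝ := 1 + ∑ k, S k k with hCdef
  have hSle : ∀ k, S k k + 1 ≤ C := by
    intro k
    have : S k k ≤ ∑ j, S j j :=
      Finset.single_le_sum (fun j _ => (hSdiag j).le) (Finset.mem_univ k)
    simp only [hCdef]; linarith
  have hCpos : 0 < C := by
    have : (0 : ℝ) ≤ ∑ k, S k k := Finset.sum_nonneg fun j _ => (hSdiag j).le
    simp only [hCdef]; linarith
  set c : ℝ := (δ / (2 * R)) ^ 2 with hcdef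
  have hcpos : 0 < c := by positivity
  -- the deterministic claim
  have hclaim : ∀ T : ℕ, 0 < (T : ℝ) → C / (T : ℝ) ≤ c → ∀ ω : Ω,
      dist (θstar T ω) θ₀ < δ / 2 → (∀ k, dist (Shat T ω k k) (S k k) < 1) →
      levyProkhorovDist
        (Measure.pi fun k =>
          gaussianReal (θstar T ω k) ((Shat T ω k k / (T : ℝ)).toNNReal))
        (Measure.dirac θ₀) ≤ δ := by
    intro T hT hTc ω hθω hSω
    apply aux_lp _ _ hδ
    refine le_trans (aux_tail _ _ hδ) ?_
    have hterm : ∀ k : Fin p,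
        gaussianReal (θstar T ω k) ((Shat T ω k k / (T : ℝ)).toNNReal)
          {x | δ ≤ |x - θ₀ k|}
        ≤ ENNReal.ofReal δ / ((p : ℝ≥0∞) + 1) := by
      intro k
      set v : ℝ≥0 := (Shat T ω k k / (T : ℝ)).toNNReal with hvdef
      have hmk : |θstar T ω k - θ₀ k| < δ / 2 := by
        have := dist_le_pi_dist (θstar T ω) θ₀ k
        rw [Real.dist_eq] at this
        linarith
      have hsub : {x : ℝ | δ ≤ |x - θ₀ k|} ⊆ {x : ℝ | δ / 2 ≤ |x - θstar T ω k|} := by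
        intro x hx
        simp only [Set.mem_setOf_eq] at hx ⊢
        have h1 : |x - θ₀ k| ≤ |x - θstar T ω k| + |θstar T ω k - θ₀ k| := by
          have := abs_sub_le x (θstar T ω k) (θ₀ k)
          linarith
        linarith
      refine le_trans (measure_mono hsub) (le_trans ?_ hRtail)
      -- gaussian tail with scaling
      have hvle : (v : ℝ) ≤ C / T := by
        have h1 : Shat T ω k k ≤ C := by
          have hd := hSω k
          rw [Real.dist_eq] at hd
          have hd2 := abs_lt.mp hd
          have hd3 := hSle k
          linarith [hd2.2]
        have h2 : Shat T ω k k / (T : ℝ) ≤ C / T := by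
          gcongr
        calc (v : ℝ) = max (Shat T ω k k / (T : ℝ)) 0 := by
              simp [hvdef, Real.coe_toNNReal']
          _ ≤ C / T := max_le h2 (by positivity)
      have hsq : Real.sqrt v * R ≤ δ / 2 := by
        have h1 : Real.sqrt v ≤ Real.sqrt c :=
          Real.sqrt_le_sqrt (hvle.trans hTc)
        have h2 : Real.sqrt c = δ / (2 * R) := by
          rw [hcdef, Real.sqrt_sq (by positivity)]
        calc Real.sqrt v * R ≤ (δ / (2 * R)) * R := by
              apply mul_le_mul_of_nonneg_right _ hRpos.le
              rw [← h2]; exact h1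
          _ = δ / 2 := by field_simp
      exact aux_gauss_tail _ _ _ v (by positivity) hsq
    calc (∑ k, gaussianReal (θstar T ω k) ((Shat T ω k k / (T : ℝ)).toNNReal)
            {x | δ ≤ |x - θ₀ k|})
        ≤ ∑ _k : Fin p, ENNReal.ofReal δ / ((p : ℝ≥0∞) + 1) :=
          Finset.sum_le_sum fun k _ => hterm k
      _ = (p : ℝ≥0∞) * (ENNReal.ofReal δ / ((p : ℝ≥0∞) + 1)) := by
          simp [Finset.sum_const, mul_comm]
      _ ≤ ((p : ℝ≥0∞) + 1) * (ENNReal.ofReal δ / ((p : ℝ≥0∞) + 1)) :=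
          mul_le_mul_left le_self_add _
      _ = ENNReal.ofReal δ := ENNReal.mul_div_cancel' (by simp) (by simp)
  -- eventual inclusion of the bad event
  have hevC : ∀ᶠ T : ℕ in atTop, 0 < (T : ℝ) ∧ C / (T : ℝ) ≤ c := by
    have h1 : Tendsto (fun T : ℕ => C / (T : ℝ)) atTop (𝓝 0) :=
      tendsto_const_div_atTop_nhds_zero_nat C
    have h2 := h1.eventually (eventually_le_nhds hcpos)
    filter_upwards [h2, eventually_gt_atTop 0] with T hT1 hT2
    exact ⟨by exact_mod_cast hT2, hT1⟩
  have hev : ∀ᶠ T : ℕ in atTop,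
      {ω | ε < levyProkhorovDist
        (Measure.pi fun k =>
          gaussianReal (θstar T ω k) ((Shat T ω k k / (T : ℝ)).toNNReal))
        (Measure.dirac θ₀)}
      ⊆ {ω | δ / 2 ≤ dist (θstar T ω) θ₀}
        ∪ ⋃ k : Fin p, {ω | 1 ≤ dist (Shat T ω k k) (S k k)} := by
    filter_upwards [hevC] with T hT
    intro ω hω
    by_contra hcon
    simp only [Set.mem_union, Set.mem_iUnion, Set.mem_setOf_eq, not_or, not_exists,
      not_le] at hcon
    have := hclaim T hT.1 hT.2 ω hcon.1 hcon.2
    exact absurd hω (not_lt.mpr (this.trans hδε))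
  -- squeeze
  have hb : Tendsto (fun T => P {ω | δ / 2 ≤ dist (θstar T ω) θ₀}
      + ∑ k : Fin p, P {ω | 1 ≤ dist (Shat T ω k k) (S k k)}) atTop (𝓝 0) := by
    have h1 := hθprob (ENNReal.ofReal (δ / 2)) (ENNReal.ofReal_pos.mpr (by positivity))
    simp_rw [edist_dist, ENNReal.ofReal_le_ofReal_iff dist_nonneg] at h1
    have h2 : Tendsto (fun T => ∑ k : Fin p,
        P {ω | 1 ≤ dist (Shat T ω k k) (S k k)}) atTop (𝓝 0) := by
      have := tendsto_finset_sum (Finset.univ : Finset (Fin p))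
        (fun k _ => hSprob k k (ENNReal.ofReal 1) (by simp))
      simp_rw [edist_dist, ENNReal.ofReal_le_ofReal_iff dist_nonneg] at this
      simpa using this
    simpa using h1.add h2
  apply tendsto_of_tendsto_of_tendsto_of_le_of_le' tendsto_const_nhds hb
  · exact Eventually.of_forall fun T => zero_le
  · filter_upwards [hev] with T hT
    refine (measure_mono hT).trans ?_
    refine (measure_union_le _ _).trans ?_
    exact add_le_add_right (measure_iUnion_fintype_le _ _) _
end

section
/- Let α ∈ (0,1) and s > 0. Let ξ* and ξ• be independent real random variables on a probability space (Ω, ℰ, P), each with the Gaussian distribution of mean 0 and variance s². Let u_q denote the q-quantile of the standard Gaussian distribution N(0,1), i.e. the unique real number with Φ(u_q) = q, where Φ is the standard Gaussian cumulative distribution function. Then P( u_{α/2} ≤ (ξ* + ξ•)/s ≤ u_{1−α/2} ) < 1 − α. -/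
open MeasureTheory ProbabilityTheory
open Real

lemma pdf_mul_eq {v : NNReal} (hv : v ≠ 0) (a : ℝ) :
    ∀ x : ℝ, gaussianPDFReal 0 v x * gaussianPDFReal 0 v (a - x)
      = (2 * π * v)⁻¹ * Real.exp (-a ^ 2 / (4 * v)) * Real.exp (-(1 / v) * (x - a / 2) ^ 2) := by
  have hv' : 0 < (v : ℝ) := by positivity
  set C : ℝ := (2 * π * v)⁻¹ * Real.exp (-a ^ 2 / (4 * v)) with hC
  intro x
  simp only [gaussianPDFReal, sub_zero]
  rw [show ((Real.sqrt (2 * π * v))⁻¹ * Real.exp (-x ^ 2 / (2 * v))) *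
      ((Real.sqrt (2 * π * v))⁻¹ * Real.exp (-(a - x) ^ 2 / (2 * v)))
      = ((Real.sqrt (2 * π * v))⁻¹ * (Real.sqrt (2 * π * v))⁻¹) *
        (Real.exp (-x ^ 2 / (2 * v)) * Real.exp (-(a - x) ^ 2 / (2 * v))) by ring,
    ← Real.exp_add, ← mul_inv, Real.mul_self_sqrt (by positivity), hC]
  have hee : Real.exp (-x ^ 2 / (2 * v) + -(a - x) ^ 2 / (2 * v))
      = Real.exp (-a ^ 2 / (4 * v)) * Real.exp (-(1 / v) * (x - a / 2) ^ 2) := by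
    rw [← Real.exp_add]
    congr 1
    field_simp
    ring
  rw [hee]
  ring

lemma pdf_conv {v : NNReal} (hv : v ≠ 0) (a : ℝ) :
    ∫ x : ℝ, gaussianPDFReal 0 v x * gaussianPDFReal 0 v (a - x) =
      gaussianPDFReal 0 (2 * v) a := by
  have hv' : 0 < (v : ℝ) := by positivity
  set C : ℝ := (2 * π * v)⁻¹ * Real.exp (-a ^ 2 / (4 * v)) with hC
  have key := pdf_mul_eq hv a
  calc ∫ x : ℝ, gaussianPDFReal 0 v x * gaussianPDFReal 0 v (a - x)
      = ∫ x : ℝ, C * Real.exp (-(1 / v) * (x - a / 2) ^ 2) := by simp only [key, hC]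
    _ = C * ∫ x : ℝ, Real.exp (-(1 / v) * (x - a / 2) ^ 2) := by
        rw [integral_const_mul]
    _ = C * Real.sqrt (π * v) := by
        congr 1
        rw [integral_sub_right_eq_self (μ := volume) (fun x : ℝ ↦ Real.exp (-(1 / (v:ℝ)) * x ^ 2)) (a/2),
          integral_gaussian]
        rw [show π / (1 / (v:ℝ)) = π * v by field_simp]
    _ = gaussianPDFReal 0 (2 * v) a := by
        simp only [gaussianPDFReal, sub_zero, hC]
        have h4 : Real.sqrt (2 * π * ((2 * v : NNReal) : ℝ)) = 2 * Real.sqrt (π * v) := by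
          push_cast
          rw [show 2 * π * (2 * (v:ℝ)) = 2 ^ 2 * (π * v) by ring,
            Real.sqrt_mul (by positivity), Real.sqrt_sq (by norm_num)]
        rw [h4]
        set s₀ : ℝ := Real.sqrt (π * v) with hs₀
        have hs : s₀ ≠ 0 := by rw [hs₀]; positivity
        have hsq : s₀ * s₀ = π * v := Real.mul_self_sqrt (by positivity)
        have hexp : -a ^ 2 / (2 * ((2 * v : NNReal) : ℝ)) = -a ^ 2 / (4 * v) := by
          push_cast; ring_nf
        rw [hexp, show 2 * π * (v:ℝ) = 2 * (π * v) by ring, ← hsq]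
        field_simp

lemma pdf_conv_integrable {v : NNReal} (hv : v ≠ 0) (a : ℝ) :
    Integrable (fun x : ℝ ↦ gaussianPDFReal 0 v x * gaussianPDFReal 0 v (a - x)) := by
  have hv' : 0 < (v : ℝ) := by positivity
  have : Integrable (fun x : ℝ ↦ Real.exp (-(1 / (v:ℝ)) * x ^ 2)) :=
    integrable_exp_neg_mul_sq (by positivity)
  have h2 : Integrable (fun x : ℝ ↦ Real.exp (-(1 / (v:ℝ)) * (x - a / 2) ^ 2)) :=
    this.comp_sub_right (a / 2)
  have heq : (fun x : ℝ ↦ gaussianPDFReal 0 v x * gaussianPDFReal 0 v (a - x))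
      = fun x : ℝ ↦ (2 * π * (v:ℝ))⁻¹ * Real.exp (-a ^ 2 / (4 * v)) *
        Real.exp (-(1 / (v:ℝ)) * (x - a / 2) ^ 2) := funext (pdf_mul_eq hv a)
  rw [heq]
  exact h2.const_mul _

lemma pdf_conv_lintegral {v : NNReal} (hv : v ≠ 0) (a : ℝ) :
    ∫⁻ x : ℝ, ENNReal.ofReal (gaussianPDFReal 0 v x) * ENNReal.ofReal (gaussianPDFReal 0 v (a - x))
      = ENNReal.ofReal (gaussianPDFReal 0 (2 * v) a) := by
  simp_rw [← ENNReal.ofReal_mul (gaussianPDFReal_nonneg 0 v _)]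
  rw [← MeasureTheory.ofReal_integral_eq_lintegral_ofReal (pdf_conv_integrable hv a)
    (Filter.Eventually.of_forall fun x ↦ mul_nonneg (gaussianPDFReal_nonneg 0 v x)
      (gaussianPDFReal_nonneg 0 v _)), pdf_conv hv a]

lemma gaussian_conv {v : NNReal} (hv : v ≠ 0) :
    Measure.map (fun p : ℝ × ℝ ↦ p.1 + p.2)
        ((gaussianReal 0 v).prod (gaussianReal 0 v)) = gaussianReal 0 (2 * v) := by
  have hv2 : (2 * v : NNReal) ≠ 0 := by simp [hv]
  have hmeas2 : Measurable (fun p : ℝ × ℝ ↦ gaussianPDFReal p.1 v p.2) := by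
    simp only [gaussianPDFReal]
    fun_prop
  ext A hA
  rw [Measure.map_apply measurable_add hA,
    Measure.prod_apply (measurable_add hA)]
  have h1 : ∀ x : ℝ, (gaussianReal 0 v) (Prod.mk x ⁻¹' ((fun p : ℝ × ℝ ↦ p.1 + p.2) ⁻¹' A))
      = ∫⁻ a in A, ENNReal.ofReal (gaussianPDFReal x v a) := by
    intro x
    have : Prod.mk x ⁻¹' ((fun p : ℝ × ℝ ↦ p.1 + p.2) ⁻¹' A) = (fun y : ℝ ↦ x + y) ⁻¹' A := rfl
    rw [this, ← Measure.map_apply (measurable_const_add x) hA, gaussianReal_map_const_add,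
      zero_add, gaussianReal_apply x hv A]
    rfl
  simp_rw [h1]
  rw [gaussianReal_of_var_ne_zero 0 hv,
    lintegral_withDensity_eq_lintegral_mul _ (measurable_gaussianPDF 0 v)
      (Measurable.lintegral_prod_right (ν := volume.restrict A)
        (f := fun x a ↦ ENNReal.ofReal (gaussianPDFReal x v a))
        (ENNReal.measurable_ofReal.comp hmeas2))]
  have hjm : Measurable (Function.uncurry fun x a : ℝ ↦
      ENNReal.ofReal (gaussianPDFReal 0 v x) * ENNReal.ofReal (gaussianPDFReal x v a)) :=
    ((ENNReal.measurable_ofReal.comp ((measurable_gaussianPDFReal 0 v).comp measurable_fst))).mul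
      (ENNReal.measurable_ofReal.comp hmeas2)
  calc ∫⁻ x, gaussianPDF 0 v x * ∫⁻ a in A, ENNReal.ofReal (gaussianPDFReal x v a)
      = ∫⁻ x, ∫⁻ a in A, ENNReal.ofReal (gaussianPDFReal 0 v x) *
          ENNReal.ofReal (gaussianPDFReal x v a) := by
        congr 1; funext x
        exact (lintegral_const_mul _
          (ENNReal.measurable_ofReal.comp (measurable_gaussianPDFReal x v))).symm
    _ = ∫⁻ a in A, ∫⁻ x, ENNReal.ofReal (gaussianPDFReal 0 v x) *
          ENNReal.ofReal (gaussianPDFReal x v a) := by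
        exact lintegral_lintegral_swap hjm.aemeasurable
    _ = ∫⁻ a in A, ENNReal.ofReal (gaussianPDFReal 0 (2 * v) a) := by
        refine setLIntegral_congr_fun hA (fun a _ ↦ ?_)
        have hsub : ∀ x : ℝ, gaussianPDFReal x v a = gaussianPDFReal 0 v (a - x) := by
          intro x
          rw [gaussianPDFReal_sub, zero_add]
        simp_rw [hsub]
        exact pdf_conv_lintegral hv a
    _ = gaussianReal 0 (2 * v) A := by
        rw [gaussianReal_apply 0 hv2 A]
        rfl

lemma gauss_singleton (a : ℝ) : gaussianReal 0 1 {a} = 0 :=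
  gaussianReal_absolutelyContinuous 0 one_ne_zero (volume_singleton)

lemma gauss_Iio (a : ℝ) : gaussianReal 0 1 (Set.Iio a) = gaussianReal 0 1 (Set.Iic a) := by
  refine le_antisymm (measure_mono Set.Iio_subset_Iic_self) ?_
  calc gaussianReal 0 1 (Set.Iic a) = gaussianReal 0 1 ({a} ∪ Set.Iio a) := by
        rw [Set.singleton_union, Set.Iio_insert]
    _ ≤ gaussianReal 0 1 {a} + gaussianReal 0 1 (Set.Iio a) := measure_union_le _ _
    _ = gaussianReal 0 1 (Set.Iio a) := by rw [gauss_singleton, zero_add]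

lemma gauss_cdf_strictMono : StrictMono (cdf (gaussianReal 0 1)) := by
  intro x y hxy
  have hpos : gaussianReal 0 1 (Set.Ioc x y) ≠ 0 := by
    intro h
    have := gaussianReal_absolutelyContinuous' 0 one_ne_zero h
    rw [Real.volume_Ioc] at this
    simp only [ENNReal.ofReal_eq_zero, sub_nonpos] at this
    linarith
  have hsplit : gaussianReal 0 1 (Set.Iic x) + gaussianReal 0 1 (Set.Ioc x y)
      = gaussianReal 0 1 (Set.Iic y) := by
    rw [← measure_union (Set.Iic_disjoint_Ioc le_rfl) measurableSet_Ioc,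
      Set.Iic_union_Ioc_eq_Iic hxy.le]
  have h1 : gaussianReal 0 1 (Set.Iic x) < gaussianReal 0 1 (Set.Iic y) := by
    rw [← hsplit]
    exact ENNReal.lt_add_right (measure_ne_top _ _) hpos
  rw [← ofReal_cdf _ x, ← ofReal_cdf _ y] at h1
  exact (ENNReal.ofReal_lt_ofReal_iff_of_nonneg (cdf_nonneg _ _)).mp h1

lemma gauss_cdf_zero : cdf (gaussianReal 0 1) 0 = 1 / 2 := by
  set ν := gaussianReal 0 1 with hν
  have hmap : ν.map (fun x : ℝ ↦ -x) = ν := by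
    have := gaussianReal_map_const_mul (μ := 0) (v := 1) (-1)
    simp only [neg_one_mul, mul_zero] at this
    rw [hν, this]
    congr 1
    ext
    norm_num
  have hIci : ν (Set.Iic 0) = ν (Set.Ici 0) := by
    conv_lhs => rw [← hmap]
    rw [Measure.map_apply measurable_neg measurableSet_Iic]
    congr 1
    ext x
    simp
  have hIoi : ν (Set.Ici 0) = ν (Set.Ioi 0) := by
    refine le_antisymm ?_ (measure_mono Set.Ioi_subset_Ici_self)
    calc ν (Set.Ici 0) = ν ({(0:ℝ)} ∪ Set.Ioi 0) := by
          rw [Set.singleton_union, Set.Ioi_insert]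
      _ ≤ ν {(0:ℝ)} + ν (Set.Ioi 0) := measure_union_le _ _
      _ = ν (Set.Ioi 0) := by rw [hν, gauss_singleton, zero_add]
  have hcompl : ν (Set.Iic 0) + ν (Set.Ioi 0) = 1 := by
    rw [← measure_union (Set.Iic_disjoint_Ioi le_rfl) measurableSet_Ioi,
      Set.Iic_union_Ioi, measure_univ]
  have h2 : 2 * ν (Set.Iic 0) = 1 := by
    rw [two_mul]
    nth_rewrite 2 [hIci]
    rw [hIoi, hcompl]
  have h3 : ν (Set.Iic 0) = 1 / 2 :=
    (ENNReal.eq_div_iff two_ne_zero ENNReal.ofNat_ne_top).mpr h2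
  have : ENNReal.ofReal (cdf ν 0) = ENNReal.ofReal (1/2) := by
    rw [ofReal_cdf, h3]
    rw [ENNReal.ofReal_div_of_pos (by norm_num), ENNReal.ofReal_one, ENNReal.ofReal_ofNat]
  rw [← ENNReal.ofReal_eq_ofReal_iff (cdf_nonneg _ _) (by norm_num)]
  exact this

lemma gauss_Icc {a b : ℝ} (hab : a ≤ b) :
    gaussianReal 0 1 (Set.Icc a b)
      = ENNReal.ofReal (cdf (gaussianReal 0 1) b - cdf (gaussianReal 0 1) a) := by
  have hset : Set.Icc a b = Set.Iic b \ Set.Iio a := by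
    ext x
    simp only [Set.mem_Icc, Set.mem_diff, Set.mem_Iic, Set.mem_Iio, not_lt]
    tauto
  have hss : Set.Iio a ⊆ Set.Iic b := fun x hx ↦ le_trans (le_of_lt hx) hab
  rw [hset, measure_diff hss measurableSet_Iio.nullMeasurableSet (measure_ne_top _ _),
    gauss_Iio, ENNReal.ofReal_sub _ (cdf_nonneg _ _), ofReal_cdf, ofReal_cdf]

/-- **Proposition 4(i), core computation (downward bias).** If `ξ*` and `ξ•` are independent
`N(0, s²)` random variables and `u_q` denotes the `q`-quantile of the standard Gaussian,
then the probability that `(ξ* + ξ•)/s` lies between `u_{α/2}` and `u_{1-α/2}` is strictly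
smaller than `1 - α`. -/
theorem stmt_16 {Ω : Type*} [MeasurableSpace Ω]
    (P : Measure Ω) [IsProbabilityMeasure P]
    (α : ℝ) (hα : α ∈ Set.Ioo (0 : ℝ) 1) (s : ℝ) (hs : 0 < s)
    (ξs ξb : Ω → ℝ) (hξs : Measurable ξs) (hξb : Measurable ξb)
    (hindep : IndepFun ξs ξb P)
    (hlaws : Measure.map ξs P = gaussianReal 0 ((s ^ 2).toNNReal))
    (hlawb : Measure.map ξb P = gaussianReal 0 ((s ^ 2).toNNReal))
    (u₁ u₂ : ℝ)
    (hu₁ : cdf (gaussianReal 0 1) u₁ = α / 2)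
    (hu₂ : cdf (gaussianReal 0 1) u₂ = 1 - α / 2) :
    P {ω | u₁ ≤ (ξs ω + ξb ω) / s ∧ (ξs ω + ξb ω) / s ≤ u₂} <
      ENNReal.ofReal (1 - α) := by
  obtain ⟨hα0, hα1⟩ := hα
  set v : NNReal := (s ^ 2).toNNReal with hvdef
  have hvr : (v : ℝ) = s ^ 2 := Real.coe_toNNReal _ (sq_nonneg s)
  have hv : v ≠ 0 := by
    intro h
    have : (v : ℝ) = 0 := by rw [h]; simp
    rw [hvr] at this
    nlinarith
  -- quantile sign facts
  have hmono := gauss_cdf_strictMono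
  have hu₁neg : u₁ < 0 := by
    by_contra h
    push_neg at h
    have := hmono.monotone h
    rw [gauss_cdf_zero, hu₁] at this
    linarith
  have hu₂pos : 0 < u₂ := by
    by_contra h
    push_neg at h
    have := hmono.monotone h
    rw [gauss_cdf_zero, hu₂] at this
    linarith
  -- the law of the sum
  have hsum : Measure.map (fun ω ↦ ξs ω + ξb ω) P = gaussianReal 0 (2 * v) := by
    have hpair : Measure.map (fun ω ↦ (ξs ω, ξb ω)) P
        = (gaussianReal 0 v).prod (gaussianReal 0 v) := by
      rw [(indepFun_iff_map_prod_eq_prod_map_map hξs.aemeasurable hξb.aemeasurable).mp hindep,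
        hlaws, hlawb]
    rw [show (fun ω ↦ ξs ω + ξb ω) = (fun p : ℝ × ℝ ↦ p.1 + p.2) ∘ (fun ω ↦ (ξs ω, ξb ω))
        from rfl,
      ← Measure.map_map measurable_add (hξs.prodMk hξb), hpair, gaussian_conv hv]
  -- rewrite the event
  have hset : {ω | u₁ ≤ (ξs ω + ξb ω) / s ∧ (ξs ω + ξb ω) / s ≤ u₂}
      = (fun ω ↦ ξs ω + ξb ω) ⁻¹' Set.Icc (u₁ * s) (u₂ * s) := by
    ext ω
    simp only [Set.mem_setOf_eq, Set.mem_preimage, Set.mem_Icc]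
    rw [le_div_iff₀ hs, div_le_iff₀ hs]
  rw [hset, ← Measure.map_apply (f := fun ω ↦ ξs ω + ξb ω) (hξs.add hξb) measurableSet_Icc, hsum]
  -- rescale to the standard gaussian
  set c : ℝ := (Real.sqrt 2 * s)⁻¹ with hcdef
  have h2pos : (0:ℝ) < Real.sqrt 2 := by positivity
  have hcpos : 0 < c := by rw [hcdef]; positivity
  have hvar : (NNReal.mk (c ^ 2) (sq_nonneg c) * (2 * v) : NNReal) = 1 := by
    ext
    push_cast [hvr]
    rw [hcdef, inv_pow, mul_pow, Real.sq_sqrt (by norm_num : (0:ℝ) ≤ 2)]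
    field_simp
  have hmap := gaussianReal_map_const_mul (μ := 0) (v := 2 * v) c
  rw [mul_zero, hvar] at hmap
  have hpre : (fun x : ℝ ↦ c * x) ⁻¹' Set.Icc (c * (u₁ * s)) (c * (u₂ * s))
      = Set.Icc (u₁ * s) (u₂ * s) := by
    ext x
    simp only [Set.mem_preimage, Set.mem_Icc]
    rw [mul_le_mul_iff_right₀ hcpos, mul_le_mul_iff_right₀ hcpos]
  have hkey : gaussianReal 0 (2 * v) (Set.Icc (u₁ * s) (u₂ * s))
      = gaussianReal 0 1 (Set.Icc (c * (u₁ * s)) (c * (u₂ * s))) := by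
    rw [← hmap, Measure.map_apply (measurable_const_mul c) measurableSet_Icc, hpre]
  rw [hkey]
  -- compare quantiles
  have ht : s * c = (Real.sqrt 2)⁻¹ := by
    rw [hcdef, mul_inv, show s * ((Real.sqrt 2)⁻¹ * s⁻¹) = (Real.sqrt 2)⁻¹ * (s * s⁻¹) by ring,
      mul_inv_cancel₀ hs.ne', mul_one]
  have ht1 : (0:ℝ) < (Real.sqrt 2)⁻¹ := by positivity
  have ht2 : (Real.sqrt 2)⁻¹ < 1 := by
    rw [inv_lt_one_iff₀]
    right
    rw [show (1:ℝ) = Real.sqrt 1 by simp]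
    exact Real.sqrt_lt_sqrt (by norm_num) (by norm_num)
  have hA : c * (u₁ * s) = u₁ * (Real.sqrt 2)⁻¹ := by rw [← ht]; ring
  have hB : c * (u₂ * s) = u₂ * (Real.sqrt 2)⁻¹ := by rw [← ht]; ring
  have hAB : c * (u₁ * s) ≤ c * (u₂ * s) := by
    rw [hA, hB]
    nlinarith
  rw [gauss_Icc hAB]
  have hΦA : α / 2 < cdf (gaussianReal 0 1) (c * (u₁ * s)) := by
    rw [← hu₁, hA]
    exact hmono (by nlinarith)
  have hΦB : cdf (gaussianReal 0 1) (c * (u₂ * s)) < 1 - α / 2 := by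
    rw [← hu₂, hB]
    exact hmono (by nlinarith)
  rw [ENNReal.ofReal_lt_ofReal_iff (by linarith)]
  linarith
end
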